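/- arXiv:2002.07504 — 5 statements merged into one kernel-verified Lean document; each statement's English description precedes it below -/
import Mathlib

section
/- Let c1 > 0. For every r ∈ [0,1] with c1*r ≤ arccos(r), one has cos(arccos(r) - c1*r) ≤ (1 + c1)*r. -/
/-- Let `c1 > 0`. For every `r ∈ [0,1]` with `c1 * r ≤ arccos r`, one has
`cos (arccos r - c1 * r) ≤ (1 + c1) * r`. -/
theorem stmt_2 (c1 : ℝ) (hc1 : 0 < c1) (r : ℝ) (hr : r ∈ Set.Icc (0:ℝ) 1)
    (hcr : c1 * r ≤ Real.arccos r) :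
    Real.cos (Real.arccos r - c1 * r) ≤ (1 + c1) * r := by
  obtain ⟨hr0, hr1⟩ := hr
  have hx0 : 0 ≤ c1 * r := mul_nonneg hc1.le hr0
  rw [Real.cos_sub, Real.cos_arccos (by linarith) hr1, Real.sin_arccos]
  have h1 : r * Real.cos (c1 * r) ≤ r :=
    calc r * Real.cos (c1 * r) ≤ r * 1 := by
          exact mul_le_mul_of_nonneg_left (Real.cos_le_one _) hr0
      _ = r := mul_one r
  have hs1 : Real.sqrt (1 - r ^ 2) ≤ 1 := by
    rw [Real.sqrt_le_one]; nlinarith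
  have hs0 : 0 ≤ Real.sqrt (1 - r ^ 2) := Real.sqrt_nonneg _
  have h2 : Real.sqrt (1 - r ^ 2) * Real.sin (c1 * r) ≤ c1 * r := by
    rcases le_or_gt 0 (Real.sin (c1 * r)) with hs | hs
    · calc Real.sqrt (1 - r ^ 2) * Real.sin (c1 * r) ≤ 1 * Real.sin (c1 * r) :=
            mul_le_mul_of_nonneg_right hs1 hs
        _ = Real.sin (c1 * r) := one_mul _
        _ ≤ c1 * r := Real.sin_le hx0
    · nlinarith
  linarith
end

section
/- Let q be a natural number, c1 > 0, let r0 ∈ (0,1) be the unique zero of r ↦ arccos(r) - c1*r on (0,1), let 0 < h < ε with h/ε < r0, and set ε̂ := ε*arccos(h/ε) - c1*h. Then for every real t with ε̂ ≤ |t| ≤ (π/2)*ε one has cos(t/ε)^{2(q+1)} ≤ (1 + c1)^{2(q+1)} * (h/ε)^{2(q+1)}. -/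
/-!
On `[0, π]` the cosine is decreasing and `1`-Lipschitz. Writing `x = h/ε` and `s = |t|/ε`, the
hypothesis says `arccos x - c1 x ≤ s ≤ π/2`; hence `s` lies at most `c1 x` to the left of
`arccos x`, so `0 ≤ cos s ≤ cos (arccos x) + c1 x = (1 + c1) x`, and the bound follows by taking
even powers.
-/

open Real

theorem Real.cos_le_add_of_arccos_sub_le {x δ s : ℝ} (hx₁ : -1 ≤ x) (hx₂ : x ≤ 1)
    (hsπ : s ≤ π) (hs : arccos x - δ ≤ s) (hδ : 0 ≤ δ) :
    cos s ≤ x + δ := by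
  rcases le_total (arccos x) s with has | hsa
  · calc cos s ≤ cos (arccos x) := cos_le_cos_of_nonneg_of_le_pi (arccos_nonneg x) hsπ has
      _ = x := cos_arccos hx₁ hx₂
      _ ≤ x + δ := le_add_of_nonneg_right hδ
  · calc cos s = cos (arccos x) + (cos s - cos (arccos x)) := by ring
      _ ≤ cos (arccos x) + |s - arccos x| := by
        gcongr; exact (le_abs_self _).trans (abs_cos_sub_cos_le _ _)
      _ = x + (arccos x - s) := by
        rw [cos_arccos hx₁ hx₂, abs_of_nonpos (sub_nonpos.2 hsa), neg_sub]
      _ ≤ x + δ := by linarith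

theorem stmt_3_general (q : ℕ) (c1 : ℝ) (hc1 : 0 < c1)
    (h ε : ℝ) (hh : 0 < h) (hhε : h < ε)
    (εhat : ℝ) (hεhat : εhat = ε * Real.arccos (h / ε) - c1 * h)
    (t : ℝ) (ht1 : εhat ≤ |t|) (ht2 : |t| ≤ (Real.pi / 2) * ε) :
    Real.cos (t / ε) ^ (2 * (q + 1)) ≤
      (1 + c1) ^ (2 * (q + 1)) * (h / ε) ^ (2 * (q + 1)) := by
  have hε : 0 < ε := hh.trans hhε
  have hx₀ : 0 < h / ε := div_pos hh hε
  have hx₁ : h / ε < 1 := (div_lt_one hε).2 hhε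
  have hs₀ : 0 ≤ |t| / ε := div_nonneg (abs_nonneg t) hε.le
  have hs₁ : |t| / ε ≤ π / 2 := (div_le_iff₀ hε).2 ht2
  have hs : arccos (h / ε) - c1 * (h / ε) ≤ |t| / ε := by
    rw [le_div_iff₀ hε, sub_mul, mul_assoc, div_mul_cancel₀ h hε.ne', mul_comm]
    exact hεhat ▸ ht1
  have hcos : cos (|t| / ε) ≤ (1 + c1) * (h / ε) := by
    have := cos_le_add_of_arccos_sub_le (by linarith) hx₁.le (by linarith [pi_pos]) hs
      (mul_nonneg hc1.le hx₀.le)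
    linarith
  have hcos₀ : 0 ≤ cos (|t| / ε) := cos_nonneg_of_mem_Icc ⟨by linarith [pi_pos], hs₁⟩
  rw [← mul_pow, ← cos_abs, abs_div, abs_of_pos hε]
  exact pow_le_pow_left₀ hcos₀ hcos _

/-- Let `q : ℕ`, `c1 > 0`, let `r0 ∈ (0,1)` be the unique zero of `r ↦ arccos r - c1 * r`
on `(0,1)`, let `0 < h < ε` with `h/ε < r0`, and set `ε̂ := ε * arccos (h/ε) - c1 * h`.
Then for every real `t` with `ε̂ ≤ |t| ≤ (π/2) * ε` one has
`cos (t/ε) ^ (2*(q+1)) ≤ (1 + c1) ^ (2*(q+1)) * (h/ε) ^ (2*(q+1))`. -/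
theorem stmt_3 (q : ℕ) (c1 : ℝ) (hc1 : 0 < c1) (r0 : ℝ) (hr0 : r0 ∈ Set.Ioo (0:ℝ) 1)
    (hr0zero : Real.arccos r0 - c1 * r0 = 0)
    (hr0unique : ∀ r ∈ Set.Ioo (0:ℝ) 1, Real.arccos r - c1 * r = 0 → r = r0)
    (h ε : ℝ) (hh : 0 < h) (hhε : h < ε) (hratio : h / ε < r0)
    (εhat : ℝ) (hεhat : εhat = ε * Real.arccos (h / ε) - c1 * h)
    (t : ℝ) (ht1 : εhat ≤ |t|) (ht2 : |t| ≤ (Real.pi / 2) * ε) :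
    Real.cos (t / ε) ^ (2 * (q + 1)) ≤
      (1 + c1) ^ (2 * (q + 1)) * (h / ε) ^ (2 * (q + 1)) :=
  stmt_3_general q c1 hc1 h ε hh hhε εhat hεhat t ht1 ht2
end

section
/- Let m ≥ 1 be an integer. For every integer k with 1 ≤ k ≤ 2m there exists a constant C > 0, depending only on m and k, such that the k-th derivative of the function r ↦ cos(r)^{2m} satisfies |d^k/dr^k (cos^{2m})(r)| ≤ C * cos(r)^{2m-k} for all r ∈ [-π/2, π/2]. -/
/-!
For `k ≤ n`, the `k`-th derivative of `u ^ n` has the form `u ^ (n - k) * g` with `g` smooth,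
since `(u ^ (j + 1) * g)' = u ^ j * ((j + 1) * u' * g + u * g')`.
For `u = cos`, the factor `g` is bounded on the compact interval `[-π/2, π/2]`, where `cos ≥ 0`.
-/

open scoped ContDiff

theorem exists_iteratedDeriv_pow_eq_pow_mul {𝕜 : Type*} [NontriviallyNormedField 𝕜]
    {u : 𝕜 → 𝕜} (hu : ContDiff 𝕜 ∞ u) {n k : ℕ} (hk : k ≤ n) :
    ∃ g : 𝕜 → 𝕜, ContDiff 𝕜 ∞ g ∧
      iteratedDeriv k (fun x => u x ^ n) = fun x => u x ^ (n - k) * g x := by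
  induction k with
  | zero => exact ⟨fun _ => 1, contDiff_const, by simp⟩
  | succ k ih =>
    obtain ⟨g, hg, hderiv⟩ := ih (by omega)
    have hu' : ContDiff 𝕜 ∞ (deriv u) := hu.iterate_deriv 1
    have hg' : ContDiff 𝕜 ∞ (deriv g) := hg.iterate_deriv 1
    refine ⟨fun x => (n - k : ℕ) * deriv u x * g x + u x * deriv g x, by fun_prop, ?_⟩
    have hnk : n - k = n - (k + 1) + 1 := by omega
    funext x
    have hasDeriv : HasDerivAt (fun x => u x ^ (n - k) * g x)
        (u x ^ (n - (k + 1)) * ((n - k : ℕ) * deriv u x * g x + u x * deriv g x)) x := by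
      refine (((hu.differentiable (by simp) x).hasDerivAt.pow (n - k)).mul
        (hg.differentiable (by simp) x).hasDerivAt).congr_deriv ?_
      rw [Pi.pow_apply, hnk, Nat.add_sub_cancel]
      ring
    rw [iteratedDeriv_succ, hderiv, hasDeriv.deriv]

theorem stmt_5_general (m : ℕ) (k : ℕ) (hk2 : k ≤ 2 * m) :
    ∃ C : ℝ, 0 < C ∧ ∀ r ∈ Set.Icc (-(Real.pi / 2)) (Real.pi / 2),
      |iteratedDeriv k (fun s : ℝ => Real.cos s ^ (2 * m)) r| ≤
        C * Real.cos r ^ (2 * m - k) := by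
  obtain ⟨g, hg, hderiv⟩ := exists_iteratedDeriv_pow_eq_pow_mul Real.contDiff_cos hk2
  obtain ⟨C, hC⟩ := isCompact_Icc.exists_bound_of_continuousOn hg.continuous.continuousOn
  refine ⟨max C 1, by positivity, fun r hr => ?_⟩
  have hcos : 0 ≤ Real.cos r := Real.cos_nonneg_of_mem_Icc hr
  rw [hderiv, abs_mul, abs_of_nonneg (pow_nonneg hcos _), mul_comm]
  exact mul_le_mul_of_nonneg_right ((hC r hr).trans (le_max_left _ _)) (pow_nonneg hcos _)

/-- Let `m ≥ 1` be an integer. For every integer `k` with `1 ≤ k ≤ 2m` there exists a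
constant `C > 0`, depending only on `m` and `k`, such that the `k`-th derivative of
`r ↦ cos r ^ (2m)` satisfies `|d^k/dr^k (cos^{2m})(r)| ≤ C * cos r ^ (2m - k)` for all
`r ∈ [-π/2, π/2]`. -/
theorem stmt_5 (m : ℕ) (hm : 1 ≤ m) (k : ℕ) (hk1 : 1 ≤ k) (hk2 : k ≤ 2 * m) :
    ∃ C : ℝ, 0 < C ∧ ∀ r ∈ Set.Icc (-(Real.pi / 2)) (Real.pi / 2),
      |iteratedDeriv k (fun s : ℝ => Real.cos s ^ (2 * m)) r| ≤
        C * Real.cos r ^ (2 * m - k) :=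
  stmt_5_general m k hk2
end

section
/- Let m ≥ 1 be an integer, let σ: ℝ → ℝ be defined by σ(r) = cos(r)^{2m} for |r| ≤ π/2 and σ(r) = 0 for |r| > π/2, let Ω ⊂ ℝ^d be open, let φ: Ω → ℝ be continuously differentiable with |∇φ(x)| ≤ c1 for all x ∈ Ω, let ε > 0, and set ϱ(x) := σ(φ(x)/ε). Then ϱ is differentiable on Ω and |∇ϱ(x)| ≤ (2m * c1 / ε) * ϱ(x)^{(2m-1)/(2m)} for all x ∈ Ω. -/
/-!
Write `σ = cos^n` on `[-π/2, π/2]`, extended by zero, with `n = 2m`. Inside the band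
`|σ'| = n cos^(n-1) |sin| ≤ n cos^(n-1) = n σ^((n-1)/n)`; at `±π/2` the cosine vanishes to first
order, so `σ` vanishes to order `n ≥ 2` and is differentiable there with `σ' = 0`. The chain rule
`∇ϱ = σ'(φ/ε) ∇φ / ε` then gives the bound.
-/

open Real Filter Topology Asymptotics

theorem Real.pow_rpow_sub_one_div {c : ℝ} (hc : 0 ≤ c) {n : ℕ} (hn : n ≠ 0) :
    (c ^ n) ^ (((n : ℝ) - 1) / n) = c ^ (n - 1) := by
  rw [← rpow_natCast c n, ← rpow_mul hc, mul_div_cancel₀ _ (Nat.cast_ne_zero.2 hn),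
    ← Nat.cast_pred (Nat.pos_of_ne_zero hn), rpow_natCast]

theorem hasDerivAt_zero_of_abs_le_pow {f : ℝ → ℝ} {a : ℝ} {n : ℕ} (hn : 1 < n) (hfa : f a = 0)
    (hf : ∀ s, |f s| ≤ |s - a| ^ n) : HasDerivAt f 0 a := by
  rw [hasDerivAt_iff_isLittleO]
  simp only [hfa, sub_zero, smul_zero]
  refine (isBigO_of_le _ fun s => ?_).trans_isLittleO (isLittleO_pow_sub_sub a hn)
  simpa only [norm_eq_abs, norm_pow, abs_abs] using hf s

theorem HasDerivAt.comp_hasGradientAt {F : Type*} [NormedAddCommGroup F] [InnerProductSpace ℝ F]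
    [CompleteSpace F] {f : F → ℝ} {f' x : F} {g : ℝ → ℝ} {g' : ℝ} (hg : HasDerivAt g g' (f x))
    (hf : HasGradientAt f f' x) : HasGradientAt (g ∘ f) (g' • f') x := by
  rw [hasGradientAt_iff_hasFDerivAt, map_smul]
  exact hg.comp_hasFDerivAt x (hasGradientAt_iff_hasFDerivAt.1 hf)

noncomputable def cosPowProfile (n : ℕ) (r : ℝ) : ℝ :=
  if |r| ≤ π / 2 then cos r ^ n else 0

section cosPowProfile

variable {n : ℕ}

theorem cos_nonneg_of_abs_le_pi_div_two {r : ℝ} (hr : |r| ≤ π / 2) : 0 ≤ cos r :=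
  cos_nonneg_of_mem_Icc ⟨by linarith [neg_abs_le r], (le_abs_self r).trans hr⟩

theorem abs_cosPowProfile_le_of_abs_eq {a : ℝ} (ha : |a| = π / 2) (s : ℝ) :
    |cosPowProfile n s| ≤ |s - a| ^ n := by
  have hcos : cos a = 0 := by
    rcases abs_eq (by positivity) |>.1 ha with rfl | rfl <;> simp
  unfold cosPowProfile
  split_ifs
  · simpa [abs_pow, hcos] using pow_le_pow_left₀ (abs_nonneg _) (abs_cos_sub_cos_le s a) n
  · simp

theorem hasDerivAt_cosPowProfile (hn : 2 ≤ n) (r : ℝ) :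
    HasDerivAt (cosPowProfile n) (if |r| ≤ π / 2 then -(n * cos r ^ (n - 1) * sin r) else 0) r := by
  rcases lt_trichotomy |r| (π / 2) with hr | hr | hr
  · rw [if_pos hr.le]
    have heq : cosPowProfile n =ᶠ[𝓝 r] fun s => cos s ^ n := by
      filter_upwards [(isOpen_lt continuous_abs continuous_const).mem_nhds hr] with s hs
      exact if_pos hs.le
    refine (((hasDerivAt_cos r).pow n).congr_of_eventuallyEq heq).congr_deriv ?_
    ring
  · have hcos : cos r = 0 := by
      rcases abs_eq (by positivity) |>.1 hr with rfl | rfl <;> simp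
    rw [if_pos hr.le, hcos, zero_pow (by omega), mul_zero, zero_mul, neg_zero]
    refine hasDerivAt_zero_of_abs_le_pow hn ?_ (abs_cosPowProfile_le_of_abs_eq hr)
    simp [cosPowProfile, hr, hcos, show n ≠ 0 by omega]
  · rw [if_neg (not_le.2 hr)]
    have heq : cosPowProfile n =ᶠ[𝓝 r] fun _ => 0 := by
      filter_upwards [(isOpen_lt continuous_const continuous_abs).mem_nhds hr] with s hs
      exact if_neg (not_le.2 hs)
    exact (hasDerivAt_const r 0).congr_of_eventuallyEq heq

theorem abs_deriv_cosPowProfile_le (hn : 2 ≤ n) (r : ℝ) :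
    |deriv (cosPowProfile n) r| ≤ n * cosPowProfile n r ^ (((n : ℝ) - 1) / n) := by
  rw [(hasDerivAt_cosPowProfile hn r).deriv, cosPowProfile]
  split_ifs with hr
  · have hcos := cos_nonneg_of_abs_le_pi_div_two hr
    rw [Real.pow_rpow_sub_one_div hcos (by omega), abs_neg, abs_mul,
      abs_of_nonneg (by positivity : (0 : ℝ) ≤ n * cos r ^ (n - 1))]
    exact mul_le_of_le_one_right (by positivity) (abs_sin_le_one r)
  · simp only [abs_zero]
    positivity

end cosPowProfile

open scoped RealInnerProductSpace

/-- Let `m ≥ 1`, let `σ(r) = cos r ^ (2m)` for `|r| ≤ π/2` and `σ(r) = 0` otherwise, let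
`Ω ⊂ ℝ^d` be open, let `φ` be continuously differentiable on `Ω` with `‖∇φ(x)‖ ≤ c1` on `Ω`,
let `ε > 0`, and set `ϱ(x) := σ(φ(x)/ε)`. Then `ϱ` is differentiable on `Ω` and
`‖∇ϱ(x)‖ ≤ (2m c1/ε) ϱ(x)^{(2m-1)/(2m)}` for all `x ∈ Ω`. -/
theorem stmt_6 (d : ℕ) (m : ℕ) (hm : 1 ≤ m)
    (σ : ℝ → ℝ)
    (hσ : ∀ r : ℝ, σ r = if |r| ≤ Real.pi / 2 then Real.cos r ^ (2 * m) else 0)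
    (Ω : Set (EuclideanSpace ℝ (Fin d))) (hΩ : IsOpen Ω)
    (φ : EuclideanSpace ℝ (Fin d) → ℝ) (hφ : ContDiffOn ℝ 1 φ Ω)
    (c1 : ℝ) (hc1 : ∀ x ∈ Ω, ‖gradient φ x‖ ≤ c1)
    (ε : ℝ) (hε : 0 < ε)
    (ϱ : EuclideanSpace ℝ (Fin d) → ℝ) (hϱ : ∀ x, ϱ x = σ (φ x / ε)) :
    ∀ x ∈ Ω, DifferentiableAt ℝ ϱ x ∧
      ‖gradient ϱ x‖ ≤ (2 * m * c1 / ε) * ϱ x ^ ((2 * (m:ℝ) - 1) / (2 * m)) := by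
  intro x hx
  obtain rfl : σ = cosPowProfile (2 * m) := funext hσ
  have hn : 2 ≤ 2 * m := by omega
  set u := φ x / ε
  have hσ' : HasDerivAt (fun t => cosPowProfile (2 * m) (t / ε))
      (deriv (cosPowProfile (2 * m)) u / ε) (φ x) := by
    refine (((hasDerivAt_cosPowProfile hn u).differentiableAt.hasDerivAt).comp (φ x)
      ((hasDerivAt_id' (φ x)).div_const ε)).congr_deriv ?_
    ring
  have hφ' : HasGradientAt φ (gradient φ x) x :=
    ((hφ.contDiffAt (hΩ.mem_nhds hx)).differentiableAt one_ne_zero).hasGradientAt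
  have hϱ' : HasGradientAt ϱ ((deriv (cosPowProfile (2 * m)) u / ε) • gradient φ x) x := by
    rw [show ϱ = (fun t => cosPowProfile (2 * m) (t / ε)) ∘ φ from funext hϱ]
    exact hσ'.comp_hasGradientAt hφ'
  refine ⟨hϱ'.differentiableAt, ?_⟩
  have hbound := abs_deriv_cosPowProfile_le hn u
  push_cast at hbound
  rw [hϱ'.gradient, norm_smul, norm_div, norm_eq_abs, norm_eq_abs, abs_of_pos hε, hϱ x]
  calc |deriv (cosPowProfile (2 * m)) u| / ε * ‖gradient φ x‖
      ≤ 2 * m * cosPowProfile (2 * m) u ^ ((2 * (m : ℝ) - 1) / (2 * m)) / ε * c1 := by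
        have hc1x := hc1 x hx
        gcongr
        exact div_nonneg ((abs_nonneg _).trans hbound) hε.le
    _ = _ := by ring
end

section
/- Let a > 0, let σ: ℝ → [0, ∞) be an even function that is nonincreasing on [0, ∞), and let g: ℝ → [0, ∞) be integrable on [-a, a]. Then ∫_{-a}^{a} σ(s) * |∫_{0}^{s} g(t) dt| ds ≤ 2a * ∫_{-a}^{a} σ(t) g(t) dt. -/
/-!
Since `σ` is even and nonincreasing in `|t|`, `σ s ≤ σ t` for every `t` between `0` and `s`, so
`σ s * |∫₀ˢ g| = ∫_{Ι 0 s} σ s * g ≤ ∫_{Ι 0 s} σ g ≤ ∫_{-a}^{a} σ g` because `g ≥ 0` and `σ g ≥ 0`.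
Integrating this pointwise bound over `s ∈ [-a, a]` gives the factor `2a`.
-/

open MeasureTheory Set intervalIntegral
open scoped Interval

namespace Function.Even

variable {α β : Type*} [AddCommGroup α] [LinearOrder α] {f : α → β}

theorem comp_abs (hf : f.Even) (x : α) : f |x| = f x := by
  rcases abs_choice x with hx | hx <;> simp only [hx, hf x]

theorem le_of_abs_le_abs [IsOrderedAddMonoid α] [Preorder β] (hf : f.Even)
    (hanti : AntitoneOn f (Ici 0)) {s t : α} (h : |t| ≤ |s|) : f s ≤ f t := by
  rw [← hf.comp_abs s, ← hf.comp_abs t]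
  exact hanti (abs_nonneg t) (abs_nonneg s) h

end Function.Even

theorem Function.Even.measurable_of_antitoneOn {f : ℝ → ℝ} (hf : f.Even)
    (hanti : AntitoneOn f (Ici 0)) : Measurable f := by
  have hmono : Antitone fun t => f (max t 0) := fun x y hxy =>
    hanti (le_max_right x 0) (le_max_right y 0) (max_le_max_right 0 hxy)
  have hcomp : (fun t => f (max t 0)) ∘ abs = f :=
    funext fun t => by simp only [Function.comp_apply, max_eq_left (abs_nonneg t), hf.comp_abs]
  exact hcomp ▸ hmono.measurable.comp measurable_abs

theorem abs_le_abs_of_mem_uIoc_zero {s t : ℝ} (ht : t ∈ Ι 0 s) : |t| ≤ |s| := by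
  simpa using abs_sub_left_of_mem_uIcc (uIoc_subset_uIcc ht)

theorem mul_abs_integral_le_setIntegral_mul {σ g : ℝ → ℝ} {S : Set ℝ} {s : ℝ}
    (hσ : ∀ t, |t| ≤ |s| → σ s ≤ σ t) (hσ0 : ∀ t, 0 ≤ σ t) (hg0 : ∀ t, 0 ≤ g t)
    (hS : Ι 0 s ⊆ S) (hg : IntegrableOn g S) (hσg : IntegrableOn (fun t => σ t * g t) S) :
    σ s * |∫ t in (0:ℝ)..s, g t| ≤ ∫ t in S, σ t * g t := by
  rw [abs_integral_eq_abs_integral_uIoc,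
    abs_of_nonneg (setIntegral_nonneg measurableSet_uIoc fun t _ => hg0 t),
    ← MeasureTheory.integral_const_mul]
  calc ∫ t in Ι 0 s, σ s * g t ≤ ∫ t in Ι 0 s, σ t * g t :=
        setIntegral_mono_on ((hg.mono_set hS).const_mul _) (hσg.mono_set hS) measurableSet_uIoc
          fun t ht => mul_le_mul_of_nonneg_right (hσ t (abs_le_abs_of_mem_uIoc_zero ht)) (hg0 t)
    _ ≤ ∫ t in S, σ t * g t :=
        setIntegral_mono_set hσg (ae_of_all _ fun t => mul_nonneg (hσ0 t) (hg0 t))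
          (ae_of_all _ hS)

/-- Let `a > 0`, let `σ : ℝ → [0,∞)` be even and nonincreasing on `[0,∞)`, and let
`g : ℝ → [0,∞)` be integrable on `[-a, a]`. Then
`∫_{-a}^{a} σ(s) |∫_0^s g(t) dt| ds ≤ 2a ∫_{-a}^{a} σ(t) g(t) dt`. -/
theorem stmt_13 (a : ℝ) (ha : 0 < a) (σ g : ℝ → ℝ)
    (hσ0 : ∀ s, 0 ≤ σ s) (hσeven : ∀ s, σ (-s) = σ s)
    (hσanti : AntitoneOn σ (Set.Ici (0:ℝ)))
    (hg0 : ∀ t, 0 ≤ g t)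
    (hgint : MeasureTheory.IntegrableOn g (Set.Icc (-a) a)) :
    ∫ s in (-a)..a, σ s * |∫ t in (0:ℝ)..s, g t| ≤
      2 * a * ∫ t in (-a)..a, σ t * g t := by
  have hσ : ∀ s t, |t| ≤ |s| → σ s ≤ σ t := fun _ _ =>
    Function.Even.le_of_abs_le_abs hσeven hσanti
  have hσg : IntegrableOn (fun t => σ t * g t) (Ioc (-a) a) :=
    (hgint.mono_set Ioc_subset_Icc_self).bdd_mul
      (Function.Even.measurable_of_antitoneOn hσeven hσanti).aestronglyMeasurable
      (ae_of_all _ fun t => by simpa [abs_of_nonneg (hσ0 t)] using hσ t 0 (by simp))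
  have hpt : ∀ s ∈ Ioc (-a) a, σ s * |∫ t in (0:ℝ)..s, g t| ≤ ∫ t in (-a)..a, σ t * g t := by
    intro s hs
    rw [integral_of_le (f := fun t => σ t * g t) (by linarith)]
    refine mul_abs_integral_le_setIntegral_mul (hσ s) hσ0 hg0 ?_
      (hgint.mono_set Ioc_subset_Icc_self) hσg
    exact Ioc_subset_Ioc (le_min (by linarith) hs.1.le) (max_le ha.le hs.2)
  calc ∫ s in (-a)..a, σ s * |∫ t in (0:ℝ)..s, g t|
      ≤ ∫ _ in (-a)..a, ∫ t in (-a)..a, σ t * g t := by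
        rw [integral_of_le (by linarith), integral_of_le (by linarith)]
        -- the left integrand need not be shown integrable: otherwise its integral is `0`
        exact integral_mono_of_nonneg (ae_of_all _ fun s => mul_nonneg (hσ0 s) (abs_nonneg _))
          (integrable_const _) ((ae_restrict_iff' measurableSet_Ioc).2 (ae_of_all _ hpt))
    _ = 2 * a * ∫ t in (-a)..a, σ t * g t := by
        rw [intervalIntegral.integral_const, smul_eq_mul]; ring
end
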